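/- arXiv:1311.3096 — 6 statements merged into one kernel-verified Lean document; each statement's English description precedes it below -/
import Mathlib

section
/- For any simple graph G with at least one edge, the largest signless Laplacian eigenvalue satisfies q_1(G) ≤ max over vertices u of positive degree of ( d(u) + (1/d(u)) · Σ_{v : uv ∈ E(G)} d(v) ), i.e., the maximum over vertices of degree plus average degree of neighbors. -/
/-!
Let `w v = max (d(v), 1)`. Conjugating `Q(G)` by `diagonal w` does not change its spectrum, and
row `k` of the conjugated matrix has diagonal entry `d(k)` and off-diagonal entries
`w(j) / w(k)` for `j ~ k`. Gershgorin's theorem therefore gives a vertex `k` with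
`μ ≤ d(k) + ∑_{j ~ k} w(j) / w(k)`. If `d(k) > 0` then `w = d` at `k` and at all its
neighbours, which is the bound; if `k` is isolated the row gives `μ ≤ 0`, below the bound at
any vertex of positive degree.
-/

open Matrix

/-- The signless Laplacian matrix `Q(G) = D(G) + A(G)` of a simple graph, over `ℝ`. -/
def SimpleGraph.signlessLap {V : Type*} [Fintype V] [DecidableEq V] (G : SimpleGraph V)
    [DecidableRel G.Adj] : Matrix V V ℝ :=
  G.degMatrix ℝ + G.adjMatrix ℝ

open Finset

namespace Matrix

variable {n : Type*} [Fintype n] [DecidableEq n]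

/-- Gershgorin's theorem applied to `diagonal w⁻¹ * A * diagonal w`, which has the spectrum of
`A`. -/
theorem exists_abs_sub_diag_le_weighted_row_sum (A : Matrix n n ℝ) {w : n → ℝ}
    (hw : ∀ i, 0 < w i) {μ : ℝ} (hμ : μ ∈ spectrum ℝ A) :
    ∃ k, |μ - A k k| ≤ ∑ j ∈ univ.erase k, |A k j| * w j / w k := by
  have hw₀ : ∀ i, w i ≠ 0 := fun i => (hw i).ne'
  let W : (Matrix n n ℝ)ˣ :=
    ⟨diagonal w, diagonal w⁻¹, by simp [diagonal_mul_diagonal, hw₀],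
      by simp [diagonal_mul_diagonal, hw₀]⟩
  have hW : ∀ k j, (W⁻¹ * A * W : Matrix n n ℝ) k j = A k j * w j / w k := fun k j => by
    simp only [W, Units.inv_mk, mul_diagonal, diagonal_mul, Pi.inv_apply]
    ring
  rw [← spectrum.units_conjugate' (u := W), ← spectrum_toLin',
    ← Module.End.hasEigenvalue_iff_mem_spectrum] at hμ
  obtain ⟨k, hk⟩ := eigenvalue_mem_ball hμ
  refine ⟨k, ?_⟩
  rw [mem_closedBall_iff_norm', hW, mul_div_cancel_right₀ _ (hw₀ k), Real.norm_eq_abs,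
    abs_sub_comm] at hk
  simpa only [hW, Real.norm_eq_abs, abs_div, abs_mul, abs_of_pos (hw _)] using hk

end Matrix

namespace SimpleGraph

variable {V : Type*} [Fintype V] (G : SimpleGraph V) [DecidableRel G.Adj]

theorem exists_degree_pos_of_edgeFinset_nonempty (he : G.edgeFinset.Nonempty) :
    ∃ v, 0 < G.degree v := by
  obtain ⟨a, b, hab⟩ := G.ne_bot_iff_exists_adj.1 (edgeFinset_nonempty.1 he)
  exact ⟨a, (G.degree_pos_iff_exists_adj a).2 ⟨b, hab⟩⟩

variable [DecidableEq V]

theorem signlessLap_apply_self (v : V) : G.signlessLap v v = G.degree v := by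
  simp [signlessLap, degMatrix]

theorem signlessLap_apply_of_ne {u v : V} (h : u ≠ v) :
    G.signlessLap u v = if G.Adj u v then 1 else 0 := by
  simp [signlessLap, degMatrix, h]

theorem exists_le_degree_add_weighted_neighbor_sum {w : V → ℝ} (hw : ∀ v, 0 < w v) {μ : ℝ}
    (hμ : μ ∈ spectrum ℝ G.signlessLap) :
    ∃ k, μ ≤ G.degree k + ∑ j ∈ G.neighborFinset k, w j / w k := by
  obtain ⟨k, hk⟩ := G.signlessLap.exists_abs_sub_diag_le_weighted_row_sum hw hμ
  refine ⟨k, ?_⟩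
  have hrow : ∑ j ∈ univ.erase k, |G.signlessLap k j| * w j / w k =
      ∑ j ∈ G.neighborFinset k, w j / w k :=
    calc ∑ j ∈ univ.erase k, |G.signlessLap k j| * w j / w k
        = ∑ j ∈ univ.erase k, if G.Adj k j then w j / w k else 0 := by
          refine sum_congr rfl fun j hj => ?_
          rw [G.signlessLap_apply_of_ne (ne_of_mem_erase hj).symm]
          split_ifs <;> simp
      _ = ∑ j, if G.Adj k j then w j / w k else 0 := sum_erase _ (by simp)
      _ = ∑ j ∈ G.neighborFinset k, w j / w k := by
          rw [neighborFinset_eq_filter, sum_filter]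
  rw [signlessLap_apply_self, hrow] at hk
  linarith [le_abs_self (μ - G.degree k)]

end SimpleGraph

/-- Merris-type bound: every signless Laplacian eigenvalue `μ` of a graph with at
least one edge satisfies `μ ≤ d(u) + (1/d(u)) ∑_{v ~ u} d(v)` for some vertex `u`
of positive degree, i.e. `q₁(G)` is at most the maximum of degree plus average
degree of neighbors. -/
theorem signlessLap_largest_eigenvalue_merris_bound
    {V : Type*} [Fintype V] [DecidableEq V] (G : SimpleGraph V) [DecidableRel G.Adj]
    (he : G.edgeFinset.Nonempty) :
    ∀ μ ∈ spectrum ℝ G.signlessLap, ∃ u : V, 0 < G.degree u ∧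
      μ ≤ (G.degree u : ℝ) +
        (1 / (G.degree u : ℝ)) * ∑ v ∈ G.neighborFinset u, (G.degree v : ℝ) := by
  intro μ hμ
  obtain ⟨k, hk⟩ := G.exists_le_degree_add_weighted_neighbor_sum
    (w := fun v => max (G.degree v : ℝ) 1) (fun v => by positivity) hμ
  have hw : ∀ v, 0 < G.degree v → max (G.degree v : ℝ) 1 = G.degree v :=
    fun v hv => max_eq_left (by exact_mod_cast hv)
  rcases (G.degree k).eq_zero_or_pos with hk₀ | hk₀
  · obtain ⟨u, hu⟩ := G.exists_degree_pos_of_edgeFinset_nonempty he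
    have hN : G.neighborFinset k = ∅ := by rwa [← card_eq_zero, G.card_neighborFinset_eq_degree]
    rw [hk₀, hN, sum_empty, Nat.cast_zero, add_zero] at hk
    exact ⟨u, hu, hk.trans (by positivity)⟩
  · refine ⟨k, hk₀, hk.trans_eq ?_⟩
    rw [hw k hk₀, one_div_mul_eq_div, sum_div]
    refine congrArg _ (sum_congr rfl fun j hj => ?_)
    rw [hw j ((G.degree_pos_iff_exists_adj j).2 ⟨k, (G.mem_neighborFinset k j).1 hj |>.symm⟩)]
end

section
/- Let G ≠ K_n be a simple graph of order n with exactly k vertices of degree n-1. Then the least signless Laplacian eigenvalue satisfies q_n(G) ≥ (1/2)( n + 2k - 2 - sqrt((n + 2k - 2)^2 - 8k(k-1)) ). -/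
open Matrix Finset

section Aux

variable {V : Type*} [Fintype V] [DecidableEq V]

omit [Fintype V] [DecidableEq V] in
private theorem sl_rect_sum (x : V → ℝ) (s t : Finset V) :
    ∑ i ∈ s, ∑ j ∈ t, (x i + x j)^2
      = (t.card : ℝ) * ∑ i ∈ s, x i^2 + 2*(∑ i ∈ s, x i)*(∑ j ∈ t, x j)
        + (s.card : ℝ) * ∑ j ∈ t, x j^2 := by
  have inner : ∀ i, ∑ j ∈ t, (x i + x j)^2
      = (t.card : ℝ) * x i^2 + 2 * x i * (∑ j ∈ t, x j) + ∑ j ∈ t, x j^2 := by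
    intro i
    rw [Finset.sum_congr rfl fun j _ => add_sq (x i) (x j), Finset.sum_add_distrib,
      Finset.sum_add_distrib, Finset.sum_const, nsmul_eq_mul, ← Finset.mul_sum]
  rw [Finset.sum_congr rfl fun i _ => inner i, Finset.sum_add_distrib, Finset.sum_add_distrib,
    Finset.sum_const, nsmul_eq_mul, ← Finset.mul_sum, ← Finset.sum_mul, ← Finset.mul_sum]

private theorem sl_split_sum (x : V → ℝ) (D : Finset V) :
    ∑ i : V, ∑ j : V, (if i ≠ j ∧ (i ∈ D ∨ j ∈ D) then (x i + x j)^2 else 0)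
      = 2*(((D.card : ℝ) + (Dᶜ.card : ℝ) - 2) * (∑ i ∈ D, x i^2)
          + (D.card : ℝ) * (∑ i ∈ Dᶜ, x i^2)
          + (∑ i ∈ D, x i)^2 + 2*(∑ i ∈ D, x i)*(∑ i ∈ Dᶜ, x i)) := by
  rw [← Finset.sum_add_sum_compl D]
  have h1 : ∀ i ∈ D, (∑ j : V, (if i ≠ j ∧ (i ∈ D ∨ j ∈ D) then (x i + x j)^2 else 0))
      = (∑ j : V, (x i + x j)^2) - (x i + x i)^2 := by
    intro i hi
    rw [← Finset.sum_erase_eq_sub (Finset.mem_univ i), Finset.sum_ite, Finset.sum_const_zero,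
      add_zero]
    refine Finset.sum_congr ?_ fun _ _ => rfl
    ext j
    simp only [Finset.mem_filter, Finset.mem_univ, true_and, Finset.mem_erase, and_true]
    exact ⟨fun h => Ne.symm h.1, fun h => ⟨Ne.symm h, Or.inl hi⟩⟩
  have h2 : ∀ i ∈ Dᶜ, (∑ j : V, (if i ≠ j ∧ (i ∈ D ∨ j ∈ D) then (x i + x j)^2 else 0))
      = ∑ j ∈ D, (x i + x j)^2 := by
    intro i hi
    rw [Finset.mem_compl] at hi
    rw [Finset.sum_ite, Finset.sum_const_zero, add_zero]
    refine Finset.sum_congr ?_ fun _ _ => rfl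
    ext j
    simp only [Finset.mem_filter, Finset.mem_univ, true_and]
    constructor
    · rintro ⟨hne, h | h⟩
      · exact absurd h hi
      · exact h
    · intro hj
      exact ⟨fun h => hi (h ▸ hj), Or.inr hj⟩
  rw [Finset.sum_congr rfl h1, Finset.sum_congr rfl h2, Finset.sum_sub_distrib]
  have h3 : ∀ i : V, ∑ j : V, (x i + x j)^2 = ∑ j ∈ D, (x i + x j)^2 + ∑ j ∈ Dᶜ, (x i + x j)^2 :=
    fun i => (Finset.sum_add_sum_compl D _).symm
  rw [Finset.sum_congr rfl fun i _ => h3 i, Finset.sum_add_distrib,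
    sl_rect_sum x D D, sl_rect_sum x D Dᶜ, sl_rect_sum x Dᶜ D]
  have h4 : ∑ i ∈ D, (x i + x i)^2 = 4 * ∑ i ∈ D, x i^2 := by
    rw [Finset.mul_sum]; exact Finset.sum_congr rfl fun _ _ => by ring
  rw [h4]
  ring

private theorem sl_bound_aux (k m α β A B r : ℝ) (hk : 0 < k) (hm : 0 < m)
    (hA : A^2 ≤ k*α) (hB : B^2 ≤ m*β)
    (hr1 : 0 ≤ k - r) (hr2 : 0 ≤ k + m - 2 - r)
    (hrq : (k + m - 2 + k - r)*(k - r) = k*m) :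
    r*(α+β) ≤ (k + m - 2)*α + k*β + A^2 + 2*A*B := by
  set P : ℝ := k + m - 2 + k - r with hP
  have hPpos : 0 < P := by nlinarith
  have key : P*k*m*((k + m - 2)*α + k*β + A^2 + 2*A*B - r*(α+β))
      = P*m*(P-k)*(k*α - A^2) + P*k*(k-r)*(m*β - B^2) + m*(P*A + k*B)^2 := by
    linear_combination (k*B^2) * hrq
  have h1 : (0:ℝ) ≤ P - k := by linarith
  have h2 : 0 ≤ P*m*(P-k)*(k*α - A^2) :=
    mul_nonneg (mul_nonneg (mul_nonneg hPpos.le hm.le) h1) (by linarith)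
  have h3 : 0 ≤ P*k*(k-r)*(m*β - B^2) :=
    mul_nonneg (mul_nonneg (mul_nonneg hPpos.le hk.le) hr1) (by linarith)
  have h4 : 0 ≤ m*(P*A + k*B)^2 := by positivity
  have h5 : 0 ≤ P*k*m*((k + m - 2)*α + k*β + A^2 + 2*A*B - r*(α+β)) := by
    rw [key]; linarith
  nlinarith [mul_pos (mul_pos hPpos hk) hm]

variable (G : SimpleGraph V) [DecidableRel G.Adj]

private theorem sl_quadform (x : V → ℝ) :
    x ⬝ᵥ (G.signlessLap *ᵥ x) =
      (∑ i : V, ∑ j : V, if G.Adj i j then (x i + x j)^2 else 0) / 2 := by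
  simp_rw [SimpleGraph.signlessLap, add_mulVec, dotProduct_add,
    SimpleGraph.dotProduct_mulVec_degMatrix, SimpleGraph.dotProduct_mulVec_adjMatrix,
    ← sum_add_distrib, SimpleGraph.degree_eq_sum_if_adj, sum_mul, ite_mul, one_mul,
    zero_mul, ← sum_add_distrib, ite_add_ite, add_zero]
  rw [← add_self_div_two (∑ x_1 : V, ∑ x_2 : V, _)]
  conv_lhs => enter [1,2,2,i,2,j]; rw [if_congr (SimpleGraph.adj_comm G i j) rfl rfl]
  conv_lhs => enter [1,2]; rw [Finset.sum_comm]
  simp_rw [← sum_add_distrib, ite_add_ite]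
  congr 2 with i
  congr 2 with j
  ring_nf

private theorem sl_eig_exists (M : Matrix V V ℝ) (μ : ℝ)
    (hμ : μ ∈ spectrum ℝ M) : ∃ x : V → ℝ, x ≠ 0 ∧ M *ᵥ x = μ • x := by
  rw [← AlgEquiv.spectrum_eq Matrix.toLinAlgEquiv',
    ← Module.End.hasEigenvalue_iff_mem_spectrum] at hμ
  obtain ⟨v, hv⟩ := hμ.exists_hasEigenvector
  refine ⟨v, hv.2, ?_⟩
  have := hv.apply_eq_smul
  simpa [Matrix.toLinAlgEquiv'_apply, Matrix.toLin'_apply] using this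

private theorem sl_adj_of_degree (i : V) (h : G.degree i = Fintype.card V - 1)
    {j : V} (hij : j ≠ i) : G.Adj i j := by
  have hsub : G.neighborFinset i ⊆ Finset.univ.erase i := by
    intro w hw
    rw [SimpleGraph.mem_neighborFinset] at hw
    exact Finset.mem_erase.mpr ⟨hw.ne', Finset.mem_univ w⟩
  have hcard : (Finset.univ.erase i).card ≤ (G.neighborFinset i).card := by
    rw [Finset.card_erase_of_mem (Finset.mem_univ i), Finset.card_univ,
      G.card_neighborFinset_eq_degree, h]
  have heq := Finset.eq_of_subset_of_card_le hsub hcard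
  have : j ∈ G.neighborFinset i := by
    rw [heq]
    exact Finset.mem_erase.mpr ⟨hij, Finset.mem_univ j⟩
  rwa [SimpleGraph.mem_neighborFinset] at this

end Aux

set_option maxHeartbeats 1000000 in
/-- For `G ≠ Kₙ` of order `n` with exactly `k` dominating vertices, every signless
Laplacian eigenvalue is at least `(n + 2k - 2 - √((n + 2k - 2)² - 8k(k-1)))/2`. -/
theorem signlessLap_least_eigenvalue_dominating_bound
    {V : Type*} [Fintype V] [DecidableEq V] (G : SimpleGraph V) [DecidableRel G.Adj]
    (n : ℕ) (hn : Fintype.card V = n)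
    (hG : G ≠ ⊤)
    (k : ℕ) (hk : (Finset.univ.filter fun v => G.degree v = n - 1).card = k) :
    ∀ μ ∈ spectrum ℝ G.signlessLap,
      (1 / 2) * ((n : ℝ) + 2 * k - 2 -
        Real.sqrt (((n : ℝ) + 2 * k - 2) ^ 2 - 8 * k * (k - 1))) ≤ μ := by
  intro μ hμ
  obtain ⟨x, hx0, hxe⟩ := sl_eig_exists G.signlessLap μ hμ
  -- the quadratic form identity
  have hq : x ⬝ᵥ (G.signlessLap *ᵥ x) = μ * ∑ i, x i ^ 2 := by
    rw [hxe, dotProduct_smul, smul_eq_mul]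
    congr 1
    simp [dotProduct, pow_two]
  have hxx : 0 < ∑ i, x i ^ 2 := by
    obtain ⟨i, hi⟩ := Function.ne_iff.mp hx0
    exact Finset.sum_pos' (fun j _ => sq_nonneg (x j))
      ⟨i, Finset.mem_univ i, lt_of_le_of_ne (sq_nonneg _) (Ne.symm (pow_ne_zero 2 hi))⟩
  have hW := sl_quadform G x
  -- degree-(n-1) vertices
  set D : Finset V := Finset.univ.filter fun v => G.degree v = n - 1 with hD
  have hdom : ∀ i ∈ D, ∀ {j : V}, j ≠ i → G.Adj i j := by
    intro i hi j hij
    rw [hD, Finset.mem_filter] at hi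
    exact sl_adj_of_degree G i (by rw [hn]; exact hi.2) hij
  -- k < n
  have hle : k ≤ n := by
    rw [← hk, ← hn, ← Finset.card_univ]
    exact Finset.card_filter_le _ _
  have hkn : k < n := by
    rcases lt_or_ge k n with h | h
    · exact h
    · exfalso
      apply hG
      have hkn' : D.card = Fintype.card V := by
        rw [hk, hn, le_antisymm hle h]
      have hDuniv : D = Finset.univ := Finset.eq_univ_of_card D hkn'
      ext a b
      simp only [SimpleGraph.top_adj]
      constructor
      · exact fun h' => h'.ne
      · intro hab
        exact hdom a (hDuniv ▸ Finset.mem_univ a) (Ne.symm hab)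
  -- case k = 0
  rcases Nat.eq_zero_or_pos k with rfl | hkpos
  · have harg : ((n : ℝ) + 2 * (0:ℕ) - 2) ^ 2 - 8 * (0:ℕ) * ((0:ℕ) - 1) = ((n:ℝ) - 2)^2 := by
      push_cast; ring
    rw [harg, Real.sqrt_sq_eq_abs]
    have hμ0 : 0 ≤ μ := by
      have h0 : 0 ≤ (∑ i : V, ∑ j : V, if G.Adj i j then (x i + x j)^2 else 0) / 2 := by
        positivity
      rw [← hW, hq] at h0
      nlinarith
    have : ((n:ℝ) + 2 * (0:ℕ) - 2) ≤ |(n:ℝ) - 2| := by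
      push_cast
      calc (n:ℝ) + 2 * 0 - 2 = (n:ℝ) - 2 := by ring
        _ ≤ |(n:ℝ) - 2| := le_abs_self _
    linarith
  -- main case k ≥ 1
  set α := ∑ i ∈ D, x i ^ 2 with hα
  set β := ∑ i ∈ Dᶜ, x i ^ 2 with hβ
  set A := ∑ i ∈ D, x i with hA
  set B := ∑ i ∈ Dᶜ, x i with hB
  have hDc : (D.card : ℝ) = k := by rw [hk]
  have hDcc : (Dᶜ.card : ℝ) = (n : ℝ) - k := by
    rw [Finset.card_compl, hk, hn, Nat.cast_sub hkn.le]
  -- sum comparison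
  have hTle : ∑ i : V, ∑ j : V, (if i ≠ j ∧ (i ∈ D ∨ j ∈ D) then (x i + x j)^2 else 0)
      ≤ ∑ i : V, ∑ j : V, if G.Adj i j then (x i + x j)^2 else 0 := by
    refine Finset.sum_le_sum fun i _ => Finset.sum_le_sum fun j _ => ?_
    by_cases hc : i ≠ j ∧ (i ∈ D ∨ j ∈ D)
    · have hadj : G.Adj i j := by
        rcases hc.2 with h | h
        · exact hdom i h (Ne.symm hc.1)
        · exact (hdom j h hc.1).symm
      rw [if_pos hc, if_pos hadj]
    · rw [if_neg hc]
      positivity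
  have hsplit := sl_split_sum x D
  -- Cauchy-Schwarz
  have hCSA : A^2 ≤ (k:ℝ) * α := by
    rw [← hDc]; exact sq_sum_le_card_mul_sum_sq
  have hCSB : B^2 ≤ ((n:ℝ) - k) * β := by
    rw [← hDcc]; exact sq_sum_le_card_mul_sum_sq
  -- the root r
  set s := Real.sqrt (((n : ℝ) + 2 * k - 2) ^ 2 - 8 * k * (k - 1)) with hs
  set r := (1 / 2) * ((n : ℝ) + 2 * k - 2 - s) with hr
  have hn1 : (k:ℝ) + 1 ≤ n := by exact_mod_cast hkn
  have hk1 : (1:ℝ) ≤ k := by exact_mod_cast hkpos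
  have hd : 0 ≤ ((n : ℝ) + 2 * k - 2) ^ 2 - 8 * k * (k - 1) := by
    nlinarith [sq_nonneg ((k:ℝ)+1), sq_nonneg ((n:ℝ)-k-1),
      mul_nonneg (by linarith : (0:ℝ) ≤ (n:ℝ)-k-1) (by linarith : (0:ℝ) ≤ 3*(k:ℝ)-1)]
  have hs0 : 0 ≤ s := Real.sqrt_nonneg _
  have hs2 : s ^ 2 = ((n : ℝ) + 2 * k - 2) ^ 2 - 8 * k * (k - 1) := Real.sq_sqrt hd
  have hr1 : 0 ≤ (k:ℝ) - r := by
    have hdn : ((n:ℝ) - 2)^2 ≤ ((n : ℝ) + 2 * k - 2) ^ 2 - 8 * k * (k - 1) := by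
      nlinarith [mul_nonneg (by linarith : (0:ℝ) ≤ (k:ℝ)) (by linarith : (0:ℝ) ≤ (n:ℝ)-k)]
    have h1 : Real.sqrt (((n:ℝ) - 2)^2) ≤ s := Real.sqrt_le_sqrt hdn
    rw [Real.sqrt_sq (by linarith : (0:ℝ) ≤ (n:ℝ) - 2)] at h1
    rw [hr]; linarith
  have hr2 : 0 ≤ (k:ℝ) + ((n:ℝ) - k) - 2 - r := by
    have hdm : (2*(k:ℝ) - n + 2)^2 ≤ ((n : ℝ) + 2 * k - 2) ^ 2 - 8 * k * (k - 1) := by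
      nlinarith [mul_nonneg (by linarith : (0:ℝ) ≤ (k:ℝ)) (by linarith : (0:ℝ) ≤ (n:ℝ)-1-k)]
    have h1 : Real.sqrt ((2*(k:ℝ) - n + 2)^2) ≤ s := Real.sqrt_le_sqrt hdm
    rw [Real.sqrt_sq_eq_abs] at h1
    have h2 : 2*(k:ℝ) - n + 2 ≤ s := le_trans (le_abs_self _) h1
    rw [hr]; linarith
  have hrq : ((k:ℝ) + ((n:ℝ) - k) - 2 + k - r)*((k:ℝ) - r) = (k:ℝ)*((n:ℝ) - k) := by
    rw [hr]
    linear_combination (1/4 : ℝ) * hs2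
  have hmain := sl_bound_aux (k:ℝ) ((n:ℝ) - k) α β A B r (by linarith) (by linarith)
    hCSA hCSB hr1 hr2 hrq
  -- assemble
  have htotal : α + β = ∑ i, x i ^ 2 := Finset.sum_add_sum_compl D _
  have hchain : r * (α + β) ≤ μ * ∑ i, x i ^ 2 := by
    have e1 : ((k:ℝ) + ((n:ℝ) - k) - 2)*α + (k:ℝ)*β + A^2 + 2*A*B
        = (∑ i : V, ∑ j : V, (if i ≠ j ∧ (i ∈ D ∨ j ∈ D) then (x i + x j)^2 else 0)) / 2 := by
      rw [hsplit, hDc, hDcc]; ring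
    rw [e1] at hmain
    calc r * (α + β) ≤ _ := hmain
      _ ≤ (∑ i : V, ∑ j : V, if G.Adj i j then (x i + x j)^2 else 0) / 2 := by linarith
      _ = μ * ∑ i, x i ^ 2 := by rw [← hW, hq]
  rw [htotal] at hchain
  have : r ≤ μ := le_of_mul_le_mul_right (by linarith) hxx
  rw [hr] at this
  exact this
end

section
/- Let G be a simple graph of order n ≥ 7 with exactly k vertices of degree n-1, where k = 1 or k = 2, and at least one vertex of degree n-2. Then q_n(G) ≥ 2k/(n-2). -/
/-!
Write `xᵀ Q(G) x = ∑_{ij ∈ E} (x_i + x_j)²`. Let `U` be the `k` vertices of degree `n - 1`, `v` a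
vertex of degree `n - 2` and `w₀` its unique non-neighbour. The set `S = U ∪ {v}` is a clique, it is
joined to every vertex of `W = V ∖ (S ∪ {w₀})`, and `U` is joined to `w₀`; keeping only these edges
bounds the quadratic form from below. For each `j ∈ W` the terms `∑_{i ∈ S} (x_i + x_j)² - ε x_j²`
are minimised in `x_j` by completing the square. The coordinates on `U` then enter only through
`p = ∑ x_u²` and `a = ∑ x_u`, which Cauchy–Schwarz relates by `a² ≤ k p`. What is left is a
quadratic form in four real variables, which for `k ∈ {1, 2}`, `ε = 2k/(n-2)` and `n ≥ 7` is an
explicit sum of squares.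
-/

open Matrix

open Finset SimpleGraph

theorem Matrix.le_of_mem_spectrum_of_forall_le_dotProduct_mulVec {n : Type*} [Fintype n]
    [DecidableEq n] {M : Matrix n n ℝ} {c μ : ℝ} (hM : ∀ x, c * (x ⬝ᵥ x) ≤ x ⬝ᵥ (M *ᵥ x))
    (hμ : μ ∈ spectrum ℝ M) : c ≤ μ := by
  rw [← Matrix.spectrum_toLin', ← Module.End.hasEigenvalue_iff_mem_spectrum] at hμ
  obtain ⟨x, hx⟩ := hμ.exists_hasEigenvector
  have hMx : M *ᵥ x = μ • x := by simpa using hx.apply_eq_smul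
  have hpos : 0 < x ⬝ᵥ x := by simpa using dotProduct_self_star_pos_iff.2 hx.2
  have := hM x
  rw [hMx, dotProduct_smul, smul_eq_mul] at this
  exact le_of_mul_le_mul_right this hpos

theorem Finset.sum_sum_add_two_mul_sum_sum_compl_le {ι : Type*} [Fintype ι] [DecidableEq ι]
    {F : ι → ι → ℝ} (hF : ∀ i j, 0 ≤ F i j) (hsymm : ∀ i j, F i j = F j i) (S : Finset ι) :
    ∑ i ∈ S, ∑ j ∈ S, F i j + 2 * ∑ i ∈ S, ∑ j ∈ Sᶜ, F i j ≤ ∑ i, ∑ j, F i j := by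
  have hrows : ∑ i, ∑ j, F i j = ∑ i ∈ S, ∑ j, F i j + ∑ i ∈ Sᶜ, ∑ j, F i j :=
    (sum_add_sum_compl S _).symm
  have hsplit : ∑ i ∈ S, ∑ j, F i j = ∑ i ∈ S, ∑ j ∈ S, F i j + ∑ i ∈ S, ∑ j ∈ Sᶜ, F i j := by
    rw [← sum_add_distrib]
    exact sum_congr rfl fun i _ => (sum_add_sum_compl S _).symm
  have hswap : ∑ i ∈ S, ∑ j ∈ Sᶜ, F i j = ∑ i ∈ Sᶜ, ∑ j ∈ S, F i j := by
    rw [sum_comm]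
    simp only [hsymm]
  have hrest : ∑ i ∈ Sᶜ, ∑ j ∈ S, F i j ≤ ∑ i ∈ Sᶜ, ∑ j, F i j :=
    sum_le_sum fun i _ => sum_le_univ_sum_of_nonneg (hF i)
  linarith

theorem Finset.sum_add_sq {ι R : Type*} [CommSemiring R] (S : Finset ι) (y : ι → R) (t : R) :
    ∑ i ∈ S, (y i + t) ^ 2 = ∑ i ∈ S, y i ^ 2 + 2 * t * ∑ i ∈ S, y i + #S * t ^ 2 := by
  simp only [add_sq, sum_add_distrib, sum_const, nsmul_eq_mul, ← mul_sum, ← sum_mul]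
  ring

theorem Finset.sum_sum_add_sq {ι R : Type*} [CommSemiring R] (S : Finset ι) (x : ι → R) :
    ∑ i ∈ S, ∑ j ∈ S, (x i + x j) ^ 2 = 2 * #S * ∑ i ∈ S, x i ^ 2 + 2 * (∑ i ∈ S, x i) ^ 2 := by
  simp only [add_sq, sum_add_distrib, sum_const, nsmul_eq_mul, ← mul_sum, ← sum_mul]
  ring

theorem Finset.le_sum_sum_add_sq {ι : Type*} (S W : Finset ι) (y : ι → ℝ) {ε : ℝ}
    (hε : ε < #S) :
    ε * ∑ j ∈ W, y j ^ 2 + #W * (∑ i ∈ S, y i ^ 2 - (∑ i ∈ S, y i) ^ 2 / (#S - ε))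
      ≤ ∑ j ∈ W, ∑ i ∈ S, (y i + y j) ^ 2 := by
  have hc : 0 < (#S : ℝ) - ε := sub_pos.2 hε
  have hrow (t : ℝ) : ε * t ^ 2 + (∑ i ∈ S, y i ^ 2 - (∑ i ∈ S, y i) ^ 2 / (#S - ε))
      ≤ ∑ i ∈ S, (y i + t) ^ 2 := by
    have hsq : ∑ i ∈ S, (y i + t) ^ 2 - ε * t ^ 2
          - (∑ i ∈ S, y i ^ 2 - (∑ i ∈ S, y i) ^ 2 / (#S - ε))
        = ((#S - ε) * t + ∑ i ∈ S, y i) ^ 2 / (#S - ε) := by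
      rw [sum_add_sq]
      field_simp
      ring
    have : 0 ≤ ((#S - ε) * t + ∑ i ∈ S, y i) ^ 2 / (#S - ε) := by positivity
    linarith
  calc _ = ∑ j ∈ W, (ε * y j ^ 2 + (∑ i ∈ S, y i ^ 2 - (∑ i ∈ S, y i) ^ 2 / (#S - ε))) := by
        rw [sum_add_distrib, ← mul_sum, sum_const, nsmul_eq_mul]
    _ ≤ _ := sum_le_sum fun j _ => hrow (y j)

theorem binary_quadratic_nonneg {K : Type*} [CommRing K] [LinearOrder K] [IsStrictOrderedRing K]
    {α β γ : K} (hα : 0 < α) (h : γ ^ 2 ≤ α * β) (x y : K) :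
    0 ≤ α * x ^ 2 + 2 * γ * x * y + β * y ^ 2 := by
  refine (mul_nonneg_iff_of_pos_left hα).1 ?_
  nlinarith [sq_nonneg (α * x + γ * y), mul_nonneg (sub_nonneg.2 h) (sq_nonneg y)]

/-- A lower bound for `xᵀ Q x - ε xᵀ x` once the coordinates outside `U ∪ {v, w₀}` are optimised
out, where `k = #U`, `m + 2` is the order of the graph, `p = ∑_{u ∈ U} x_u²`, `a = ∑_{u ∈ U} x_u`,
`b = x_v` and `s = x_{w₀}`. -/
noncomputable def reducedForm (k m ε p a b s : ℝ) : ℝ :=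
  (k - 1) * (p + b ^ 2) + (a + b) ^ 2 + (p + 2 * s * a + k * s ^ 2)
    + (m - k) * (p + b ^ 2 - (a + b) ^ 2 / (k + 1 - ε)) - ε * (p + b ^ 2 + s ^ 2)

theorem reducedForm_nonneg_of_eq_one {k m p a b s : ℝ} (hk : k = 1) (hm : 5 ≤ m)
    (hp : a ^ 2 ≤ k * p) : 0 ≤ reducedForm k m (2 * k / m) p a b s := by
  subst hk
  have hm0 : m ≠ 0 := by positivity
  have hm1 : m - 1 ≠ 0 := by linarith
  have hm2 : m - 2 ≠ 0 := by linarith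
  -- complete the square in `s`; the remaining form in `a` and `(m - 2) b` is positive definite
  have key : reducedForm 1 m (2 * 1 / m) p a b s
      = (2 * (m - 2) * (m ^ 2 - 2) * (1 * p - a ^ 2) + 2 * ((m - 2) * s + m * a) ^ 2
        + ((m ^ 3 - 2 * m ^ 2 - 8 * m + 8) * a ^ 2 + 2 * -(m * (m - 2)) * a * ((m - 2) * b)
          + (m + 2) * ((m - 2) * b) ^ 2)) / (2 * m * (m - 2)) := by
    rw [reducedForm, show (1 : ℝ) + 1 - 2 * 1 / m = 2 * (m - 1) / m by field_simp; ring]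
    field_simp
    ring
  have hQ := binary_quadratic_nonneg (α := m ^ 3 - 2 * m ^ 2 - 8 * m + 8) (β := m + 2)
    (γ := -(m * (m - 2))) (by nlinarith) (by nlinarith) a ((m - 2) * b)
  rw [key]
  refine div_nonneg ?_ (by nlinarith)
  nlinarith [mul_nonneg (by nlinarith : 0 ≤ 2 * (m - 2) * (m ^ 2 - 2)) (sub_nonneg.2 hp),
    sq_nonneg ((m - 2) * s + m * a)]

theorem reducedForm_nonneg_of_eq_two {k m p a b s : ℝ} (hk : k = 2) (hm : 5 ≤ m)
    (hp : a ^ 2 ≤ k * p) : 0 ≤ reducedForm k m (2 * k / m) p a b s := by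
  subst hk
  have hm0 : m ≠ 0 := by positivity
  have hm2 : m - 2 ≠ 0 := by linarith
  have hm34 : m * 3 - 4 ≠ 0 := by linarith
  have hm5 : 0 ≤ m - 5 := by linarith
  have key : reducedForm 2 m (2 * 2 / m) p a b s
      = ((m - 2) * (3 * m - 4) * (m ^ 2 - 4) * (2 * p - a ^ 2)
        + (3 * m - 4) * (2 * (m - 2) * s + m * a) ^ 2
        + ((m ^ 4 + m ^ 3 - 28 * m ^ 2 + 56 * m - 32) * a ^ 2
          + 2 * -(2 * m * (m - 1) * (m - 4)) * a * ((m - 2) * b)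
          + 4 * (m ^ 2 + m - 4) * ((m - 2) * b) ^ 2)) / (2 * m * (m - 2) * (3 * m - 4)) := by
    rw [reducedForm, show (2 : ℝ) + 1 - 2 * 2 / m = (3 * m - 4) / m by field_simp; ring]
    field_simp
    ring
  have hQ := binary_quadratic_nonneg (α := m ^ 4 + m ^ 3 - 28 * m ^ 2 + 56 * m - 32)
    (β := 4 * (m ^ 2 + m - 4)) (γ := -(2 * m * (m - 1) * (m - 4)))
    (by nlinarith [pow_nonneg hm5 3, pow_nonneg hm5 4])
    (by nlinarith [pow_nonneg hm5 3, pow_nonneg hm5 4, pow_nonneg hm5 5, pow_nonneg hm5 6])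
    a ((m - 2) * b)
  have hcoef : 0 ≤ (m - 2) * (3 * m - 4) * (m ^ 2 - 4) := by
    have := mul_nonneg (by linarith : 0 ≤ m - 2) (by linarith : (0 : ℝ) ≤ 3 * m - 4)
    nlinarith
  rw [key]
  refine div_nonneg ?_ (by nlinarith)
  nlinarith [mul_nonneg hcoef (sub_nonneg.2 hp),
    mul_nonneg (by linarith : (0 : ℝ) ≤ 3 * m - 4) (sq_nonneg (2 * (m - 2) * s + m * a))]

namespace SimpleGraph

theorem sum_sum_ite_adj_of_isClique {V : Type*} [DecidableEq V] {G : SimpleGraph V}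
    [DecidableRel G.Adj] {S : Finset V} (hS : G.IsClique (S : Set V)) (x : V → ℝ) :
    ∑ i ∈ S, ∑ j ∈ S, (if G.Adj i j then (x i + x j) ^ 2 else 0)
      = 2 * ((#S : ℝ) - 2) * ∑ i ∈ S, x i ^ 2 + 2 * (∑ i ∈ S, x i) ^ 2 := by
  have hrow : ∀ i ∈ S, ∑ j ∈ S, (if G.Adj i j then (x i + x j) ^ 2 else 0)
      = ∑ j ∈ S, (x i + x j) ^ 2 - 4 * x i ^ 2 := by
    intro i hi
    rw [← add_sum_erase S _ hi, ← add_sum_erase S (fun j => (x i + x j) ^ 2) hi,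
      sum_congr rfl fun j hj => if_pos (hS hi (mem_of_mem_erase hj) (ne_of_mem_erase hj).symm)]
    simp only [G.irrefl, if_false]
    ring
  rw [sum_congr rfl hrow, sum_sub_distrib, sum_sum_add_sq, ← mul_sum]
  ring

variable {V : Type*} [Fintype V] [DecidableEq V] (G : SimpleGraph V) [DecidableRel G.Adj]

theorem dotProduct_signlessLap_mulVec (x : V → ℝ) :
    x ⬝ᵥ (G.signlessLap *ᵥ x) =
      (∑ i, ∑ j, if G.Adj i j then (x i + x j) ^ 2 else 0) / 2 := by
  simp_rw [signlessLap, add_mulVec, dotProduct_add, dotProduct_mulVec_degMatrix,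
    dotProduct_mulVec_adjMatrix, ← sum_add_distrib, degree_eq_sum_if_adj, sum_mul, ite_mul,
    one_mul, zero_mul, ← sum_add_distrib, ite_add_ite, add_zero]
  rw [← add_self_div_two (∑ _ : V, ∑ _ : V, _)]
  conv_lhs => enter [1, 2, 2, i, 2, j]; rw [if_congr (G.adj_comm i j) rfl rfl]
  conv_lhs => enter [1, 2]; rw [sum_comm]
  simp_rw [← sum_add_distrib, ite_add_ite]
  congr 2 with i
  congr 2 with j
  ring_nf

variable {G}

theorem le_dotProduct_signlessLap_mulVec {U : Finset V} (hU : ∀ u ∈ U, G.IsUniversal u)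
    {v w₀ : V} (hvw₀ : Gᶜ.Adj v w₀) (hv : ∀ w, Gᶜ.Adj v w → w = w₀) (x : V → ℝ) :
    ((#U : ℝ) - 1) * ∑ i ∈ insert v U, x i ^ 2 + (∑ i ∈ insert v U, x i) ^ 2
      + ∑ i ∈ U, (x i + x w₀) ^ 2
      + ∑ j ∈ (insert v U)ᶜ.erase w₀, ∑ i ∈ insert v U, (x i + x j) ^ 2
      ≤ x ⬝ᵥ (G.signlessLap *ᵥ x) := by
  set S := insert v U
  set F : V → V → ℝ := fun i j => if G.Adj i j then (x i + x j) ^ 2 else 0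
  obtain ⟨hw₀v, hnadj⟩ := (G.compl_adj v w₀).1 hvw₀
  have hvU : v ∉ U := fun h => isIsolated_compl_iff_isUniversal.2 (hU v h) w₀ hvw₀
  have hw₀U : w₀ ∉ U := fun h => isIsolated_compl_iff_isUniversal.2 (hU w₀ h) v hvw₀.symm
  have hw₀S : w₀ ∈ Sᶜ := by simp [S, hw₀v.symm, hw₀U]
  have hS : G.IsClique (S : Set V) := by
    rw [coe_insert, isClique_insert]
    exact ⟨fun u hu w _ huw => hU u hu huw, fun u hu hvu => (hU u hu hvu.symm).symm⟩
  have hSW : ∀ i ∈ S, ∀ j ∈ Sᶜ.erase w₀, G.Adj i j := by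
    intro i hi j hj
    obtain ⟨hjw₀, hjS⟩ := mem_erase.1 hj
    have hij : i ≠ j := ne_of_mem_of_not_mem hi (mem_compl.1 hjS)
    rcases mem_insert.1 hi with rfl | hiU
    · by_contra h
      exact hjw₀ (hv j ((G.compl_adj _ _).2 ⟨hij, h⟩))
    · exact hU i hiU hij
  have hcompl : ∑ i ∈ S, ∑ j ∈ Sᶜ, F i j
      = ∑ i ∈ U, (x i + x w₀) ^ 2 + ∑ j ∈ Sᶜ.erase w₀, ∑ i ∈ S, (x i + x j) ^ 2 := by
    simp_rw [← add_sum_erase Sᶜ _ hw₀S, sum_add_distrib]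
    rw [sum_comm, sum_insert hvU]
    simp only [F, hnadj, if_false, zero_add]
    congr 1
    · exact sum_congr rfl fun i hi => if_pos (hU i hi (ne_of_mem_of_not_mem hi hw₀U))
    · exact sum_congr rfl fun j hj => sum_congr rfl fun i hi => if_pos (hSW i hi j hj)
  have hclique := sum_sum_ite_adj_of_isClique hS x
  rw [card_insert_of_notMem hvU, Nat.cast_succ] at hclique
  have hF := sum_sum_add_two_mul_sum_sum_compl_le (F := F)
    (fun i j => by positivity) (fun i j => by simp only [F, G.adj_comm, add_comm]) S
  rw [dotProduct_signlessLap_mulVec]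
  linarith

theorem mul_dotProduct_self_le_signlessLap {U : Finset V} (hU : ∀ u ∈ U, G.IsUniversal u)
    {v w₀ : V} (hvw₀ : Gᶜ.Adj v w₀) (hv : ∀ w, Gᶜ.Adj v w → w = w₀) {ε : ℝ} (hε : ε < #U + 1)
    (hred : ∀ p a b s : ℝ, a ^ 2 ≤ #U * p → 0 ≤ reducedForm #U (Fintype.card V - 2) ε p a b s)
    (x : V → ℝ) : ε * (x ⬝ᵥ x) ≤ x ⬝ᵥ (G.signlessLap *ᵥ x) := by
  have hvU : v ∉ U := fun h => isIsolated_compl_iff_isUniversal.2 (hU v h) w₀ hvw₀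
  have hw₀S : w₀ ∈ (insert v U)ᶜ := by
    simpa [hvw₀.ne'] using fun h => isIsolated_compl_iff_isUniversal.2 (hU w₀ h) v hvw₀.symm
  have hcardW : (#((insert v U)ᶜ.erase w₀) : ℝ) = Fintype.card V - 2 - #U := by
    have h₁ := card_erase_add_one hw₀S
    have h₂ := card_compl_add_card (insert v U)
    rw [card_insert_of_notMem hvU] at h₂
    rw [← h₂, ← h₁]
    push_cast
    ring
  have hq := le_dotProduct_signlessLap_mulVec hU hvw₀ hv x
  have hW := le_sum_sum_add_sq (insert v U) ((insert v U)ᶜ.erase w₀) x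
    (by rwa [card_insert_of_notMem hvU, Nat.cast_succ])
  have hxx : x ⬝ᵥ x = ∑ j ∈ (insert v U)ᶜ.erase w₀, x j ^ 2 + x w₀ ^ 2
      + ∑ i ∈ insert v U, x i ^ 2 := by
    rw [dotProduct, ← sum_add_sum_compl (insert v U), ← add_sum_erase _ _ hw₀S]
    simp only [sq]
    ring
  have hred' := hred _ _ (x v) (x w₀) (sq_sum_le_card_mul_sum_sq (s := U) (f := x))
  rw [sum_insert hvU, sum_insert hvU, sum_add_sq] at hq
  rw [sum_insert hvU, sum_insert hvU, card_insert_of_notMem hvU, hcardW, Nat.cast_succ] at hW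
  rw [hxx, sum_insert hvU]
  unfold reducedForm at hred'
  linear_combination hq + hW + hred'

end SimpleGraph

/-- For a graph of order `n ≥ 7` with exactly `k ∈ {1,2}` vertices of degree `n-1`
and at least one vertex of degree `n-2`, every signless Laplacian eigenvalue is at
least `2k/(n-2)`. -/
theorem signlessLap_least_eigenvalue_k_dominating_bound
    {V : Type*} [Fintype V] [DecidableEq V] (G : SimpleGraph V) [DecidableRel G.Adj]
    (n : ℕ) (hn : Fintype.card V = n) (h7 : 7 ≤ n)
    (k : ℕ) (hk : (Finset.univ.filter fun v => G.degree v = n - 1).card = k)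
    (hk12 : k = 1 ∨ k = 2)
    (hdeg : ∃ v : V, G.degree v = n - 2) :
    ∀ μ ∈ spectrum ℝ G.signlessLap, 2 * (k : ℝ) / ((n : ℝ) - 2) ≤ μ := by
  intro μ hμ
  obtain ⟨v, hv⟩ := hdeg
  obtain ⟨w₀, hvw₀, hw₀⟩ := degree_eq_one_iff_existsUnique_adj.1
    (show Gᶜ.degree v = 1 by rw [degree_compl, hv, hn]; omega)
  have hU : ∀ u ∈ univ.filter fun v => G.degree v = n - 1, G.IsUniversal u := fun u hu =>
    (G.degree_eq_card_sub_one u).1 (hn ▸ (mem_filter.1 hu).2)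
  have hm : (5 : ℝ) ≤ n - 2 := by
    have : (7 : ℝ) ≤ n := by exact_mod_cast h7
    linarith
  have hk' : (k : ℝ) = 1 ∨ (k : ℝ) = 2 := by exact_mod_cast hk12
  refine le_of_mem_spectrum_of_forall_le_dotProduct_mulVec
    (mul_dotProduct_self_le_signlessLap hU hvw₀ hw₀ ?_ fun p a b s hp => ?_) hμ
  · rw [hk, div_lt_iff₀ (by linarith)]
    nlinarith
  · rw [hk] at hp ⊢
    rw [hn]
    exact hk'.elim (reducedForm_nonneg_of_eq_one · hm hp) (reducedForm_nonneg_of_eq_two · hm hp)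
end

section
/- For n ≥ 3, if G is the complete graph K_n with one edge removed, then the least signless Laplacian eigenvalue of G equals (1/2)(3n - 6 - sqrt((n-2)(n+6))). -/
open Matrix

open Finset in
lemma mem_spectrum_matrix_iff_aux {V : Type*} [Fintype V] [DecidableEq V]
    (M : Matrix V V ℝ) (μ : ℝ) :
    μ ∈ spectrum ℝ M ↔ ∃ v, v ≠ 0 ∧ M *ᵥ v = μ • v := by
  rw [spectrum.mem_iff, Matrix.isUnit_iff_isUnit_det, isUnit_iff_ne_zero, not_ne_iff,
    ← Matrix.exists_mulVec_eq_zero_iff]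
  have key : ∀ v : V → ℝ, (algebraMap ℝ (Matrix V V ℝ) μ - M) *ᵥ v = μ • v - M *ᵥ v := by
    intro v
    rw [Algebra.algebraMap_eq_smul_one, Matrix.sub_mulVec, Matrix.smul_mulVec,
      Matrix.one_mulVec]
  constructor
  · rintro ⟨v, hv, h⟩
    rw [key, sub_eq_zero] at h
    exact ⟨v, hv, h.symm⟩
  · rintro ⟨v, hv, h⟩
    exact ⟨v, hv, by rw [key, h, sub_self]⟩

lemma quad_ineq_aux (m c r t NT P : ℝ) (hm : 3 ≤ m) (hc : 0 ≤ c)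
    (hrel : c^2 + (m-2)*c - (2*m-4) = 0) (h1 : r^2 ≤ (m-2)*NT) (h2 : t^2 ≤ 2*P) :
    0 ≤ c*(NT + P) + (r+t)^2 - t^2 := by
  have h3 : (0:ℝ) < m - 2 := by linarith
  have key : 2*(2*c+2*(m-2)) * (c*r^2 + c*(m-2)*t^2/2 + (m-2)*((r+t)^2 - t^2))
      = ((2*c+2*(m-2))*r + 2*(m-2)*t)^2 + 2*(m-2)*t^2*(c^2 + (m-2)*c - (2*m-4)) := by
    ring
  rw [hrel, mul_zero, add_zero] at key
  have hA : (0:ℝ) < 2*(2*c+2*(m-2)) := by linarith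
  have hP0 : 0 ≤ c*r^2 + c*(m-2)*t^2/2 + (m-2)*((r+t)^2 - t^2) := by
    nlinarith [sq_nonneg ((2*c+2*(m-2))*r + 2*(m-2)*t)]
  have hNT : 0 ≤ NT := by nlinarith [sq_nonneg r]
  have hP : 0 ≤ P := by nlinarith [sq_nonneg t]
  nlinarith [mul_le_mul_of_nonneg_left h1 hc, mul_le_mul_of_nonneg_left h2 (mul_nonneg hc h3.le),
    mul_nonneg hc hNT, mul_nonneg hc hP]

set_option maxHeartbeats 1000000 in
open Finset in
/-- For `n ≥ 3`, the least signless Laplacian eigenvalue of `Kₙ` minus one edge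
equals `(3n - 6 - √((n-2)(n+6)))/2`. -/
theorem signlessLap_least_eigenvalue_complete_minus_edge
    {V : Type*} [Fintype V] [DecidableEq V] (G : SimpleGraph V) [DecidableRel G.Adj]
    (n : ℕ) (hn : Fintype.card V = n) (h3 : 3 ≤ n)
    (a b : V) (hab : a ≠ b)
    (hG : G = (⊤ : SimpleGraph V) \ SimpleGraph.fromEdgeSet {s(a, b)}) :
    IsLeast (spectrum ℝ G.signlessLap)
      ((1 / 2) * (3 * (n : ℝ) - 6 - Real.sqrt (((n : ℝ) - 2) * ((n : ℝ) + 6)))) := by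
  -- abbreviations
  set m : ℝ := (n : ℝ) with hm'
  have hm : (3:ℝ) ≤ m := by rw [hm']; exact_mod_cast h3
  set s : ℝ := Real.sqrt ((m - 2) * (m + 6)) with hs'
  have hs0 : 0 ≤ s := Real.sqrt_nonneg _
  have hs2 : s^2 = (m-2)*(m+6) := Real.sq_sqrt (by nlinarith)
  have hsge : m - 2 ≤ s := by nlinarith
  set u : V → ℝ := fun x => if x = a ∨ x = b then 1 else 0 with hu'
  -- adjacency
  have hadj : ∀ x y, G.Adj x y ↔ x ≠ y ∧ ¬((x = a ∧ y = b) ∨ (x = b ∧ y = a)) := by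
    intro x y
    rw [hG]
    simp only [SimpleGraph.sdiff_adj, SimpleGraph.top_adj, SimpleGraph.fromEdgeSet_adj,
      Set.mem_singleton_iff, Sym2.eq_iff]
    tauto
  -- degrees
  have hdeg : ∀ x : V, (G.degree x : ℝ) = m - 1 - u x := by
    have hca : ∀ x : V, (x = a ∨ x = b) → G.neighborFinset x = univ \ {a, b} := by
      intro x hx
      ext y
      simp only [SimpleGraph.mem_neighborFinset, hadj, mem_sdiff, mem_univ, true_and,
        mem_insert, mem_singleton]
      rcases hx with rfl | rfl
      · constructor
        · rintro ⟨h1, h2⟩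
          push_neg at h2
          exact not_or.mpr ⟨fun h => h1 h.symm, fun h => h2.1 rfl h⟩
        · intro h
          push_neg at h
          refine ⟨fun h' => h.1 h'.symm, ?_⟩
          rintro (⟨-, h'⟩ | ⟨h', -⟩)
          · exact h.2 h'
          · exact hab h'
      · constructor
        · rintro ⟨h1, h2⟩
          push_neg at h2
          exact not_or.mpr ⟨fun h => h2.2 rfl h, fun h => h1 h.symm⟩
        · intro h
          push_neg at h
          refine ⟨fun h' => h.2 h'.symm, ?_⟩
          rintro (⟨h', -⟩ | ⟨-, h'⟩)
          · exact hab h'.symm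
          · exact h.1 h'
    intro x
    by_cases hx : x = a ∨ x = b
    · rw [SimpleGraph.degree, hca x hx, card_sdiff_of_subset (subset_univ _), card_univ, hn,
        card_pair hab]
      have h2 : 2 ≤ n := by omega
      rw [hu']
      simp only [hx, if_pos]
      push_cast [Nat.cast_sub h2]
      ring
    · push_neg at hx
      have hnb : G.neighborFinset x = univ.erase x := by
        ext y
        simp only [SimpleGraph.mem_neighborFinset, hadj, mem_erase, mem_univ, and_true]
        constructor
        · rintro ⟨h1, _⟩; exact fun h => h1 h.symm
        · intro h
          refine ⟨fun h' => h h'.symm, ?_⟩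
          rintro (⟨h', -⟩ | ⟨h', -⟩)
          · exact hx.1 h'
          · exact hx.2 h'
      rw [SimpleGraph.degree, hnb, card_erase_of_mem (mem_univ x), card_univ, hn, hu']
      simp only [not_or.mpr hx, if_neg, if_false]
      have h1 : 1 ≤ n := by omega
      push_cast [Nat.cast_sub h1]
      ring
  -- matrix identity
  have hQ : G.signlessLap = (m-2) • (1 : Matrix V V ℝ) + Matrix.of (fun _ _ => (1:ℝ))
      - Matrix.vecMulVec u u := by
    ext x y
    simp only [SimpleGraph.signlessLap, Matrix.add_apply, Matrix.sub_apply, Matrix.smul_apply,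
      Matrix.one_apply, Matrix.of_apply, Matrix.vecMulVec_apply, SimpleGraph.degMatrix,
      Matrix.diagonal_apply, SimpleGraph.adjMatrix_apply, smul_eq_mul]
    by_cases hxy : x = y
    · subst hxy
      rw [if_pos rfl, if_pos rfl, if_neg (G.irrefl), hdeg x, hu']
      by_cases hx : x = a ∨ x = b <;> simp [hx] <;> ring
    · rw [if_neg hxy, if_neg hxy]
      by_cases hp : (x = a ∧ y = b) ∨ (x = b ∧ y = a)
      · have hA : ¬ G.Adj x y := by rw [hadj]; tauto
        have huu : u x * u y = 1 := by
          rw [hu']; rcases hp with ⟨rfl, rfl⟩ | ⟨rfl, rfl⟩ <;> simp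
        rw [if_neg hA, huu]; ring
      · have hA : G.Adj x y := by rw [hadj]; exact ⟨hxy, hp⟩
        have huu : u x * u y = 0 := by
          rw [hu']
          by_cases h1 : x = a ∨ x = b
          · by_cases h2 : y = a ∨ y = b
            · exfalso
              rcases h1 with rfl | rfl <;> rcases h2 with rfl | rfl <;> tauto
            · simp [h2]
          · simp [h1]
        rw [if_pos hA, huu]; ring
  -- dot products with u
  have hdotu : ∀ v : V → ℝ, u ⬝ᵥ v = v a + v b := by
    intro v
    have hpt : ∀ x, u x * v x = (if x = a then v x else 0) + (if x = b then v x else 0) := by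
      intro x
      rw [hu']
      by_cases h1 : x = a
      · subst h1; simp [hab]
      · by_cases h2 : x = b
        · subst h2; simp [h1]
        · simp [h1, h2]
    simp only [dotProduct, hpt, Finset.sum_add_distrib, Finset.sum_ite_eq', mem_univ, if_pos]
  have hsumu : ∑ x : V, u x = 2 := by
    have := hdotu (fun _ => 1)
    simp only [dotProduct, mul_one] at this
    rw [this]; norm_num
  -- mulVec formula
  have hQv : ∀ v : V → ℝ, G.signlessLap *ᵥ v
      = fun x => (m-2) * v x + (∑ y, v y) - (v a + v b) * u x := by
    intro v
    funext x
    rw [hQ]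
    simp only [Matrix.sub_mulVec, Matrix.add_mulVec, Pi.sub_apply, Pi.add_apply,
      Matrix.smul_mulVec, Matrix.one_mulVec, Pi.smul_apply, smul_eq_mul]
    have h1 : ((Matrix.of fun _ _ => (1:ℝ)) *ᵥ v) x = ∑ y, v y := by
      simp [Matrix.mulVec, dotProduct]
    have h2 : ((Matrix.vecMulVec u u) *ᵥ v) x = (v a + v b) * u x := by
      simp only [Matrix.mulVec, dotProduct, Matrix.vecMulVec_apply, mul_assoc,
        ← Finset.mul_sum]
      rw [show ∑ y, u y * v y = u ⬝ᵥ v from rfl, hdotu v]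
      ring
    rw [h1, h2]
  -- the eigenvalue and auxiliary quantities
  set lam : ℝ := 1 / 2 * (3 * m - 6 - s) with hlam'
  set μ : ℝ := (m - 2 - s) / 2 with hμ'
  have hlamμ : lam = μ + (m - 2) := by rw [hlam', hμ']; ring
  have hrel : μ^2 - (m-2)*μ - (2*m-4) = 0 := by rw [hμ']; linear_combination hs2 / 4
  set c : ℝ := (s - (m-2))/2 with hc'
  have hc0 : 0 ≤ c := by rw [hc']; linarith
  have hcrel : c^2 + (m-2)*c - (2*m-4) = 0 := by rw [hc']; linear_combination hs2 / 4
  have hlamc : lam = (m - 2) - c := by rw [hlam', hc']; ring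
  have hua : u a = 1 := by rw [hu']; simp
  have hub : u b = 1 := by rw [hu']; simp
  constructor
  · -- membership: explicit eigenvector
    rw [mem_spectrum_matrix_iff_aux]
    refine ⟨fun x => 2 + (μ - m) * u x, ?_, ?_⟩
    · obtain ⟨x, hxa, hxb⟩ : ∃ x : V, x ≠ a ∧ x ≠ b := by
        by_contra hcon
        push_neg at hcon
        have hsub : (univ : Finset V) ⊆ {a, b} := fun x _ => by
          rcases eq_or_ne x a with rfl | h
          · exact Finset.mem_insert_self _ _
          · rw [Finset.mem_insert, Finset.mem_singleton]; exact Or.inr (hcon x h)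
        have hle := Finset.card_le_card hsub
        rw [card_univ, hn, Finset.card_pair hab] at hle
        omega
      intro h
      have hx0 := congrFun h x
      have hux : u x = 0 := by rw [hu']; simp [hxa, hxb]
      simp only [Pi.zero_apply] at hx0
      rw [hux, mul_zero, add_zero] at hx0
      norm_num at hx0
    · rw [hQv]
      have hsw : ∑ y : V, (2 + (μ - m) * u y) = 2 * m + (μ - m) * 2 := by
        rw [Finset.sum_add_distrib, Finset.sum_const, ← Finset.mul_sum, hsumu, card_univ, hn,
          nsmul_eq_mul]
        rw [hm']
        ring
      funext x
      simp only [Pi.smul_apply, smul_eq_mul]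
      rw [hsw, hua, hub, hlamμ]
      by_cases hx : x = a ∨ x = b
      · have hux : u x = 1 := by rw [hu']; simp [hx]
        rw [hux]
        linear_combination hrel - hs2 / 2
      · have hux : u x = 0 := by rw [hu']; simp [hx]
        rw [hux]
        ring
  · -- lower bound
    rintro μ' hμ'
    rw [mem_spectrum_matrix_iff_aux] at hμ'
    obtain ⟨v, hv0, hv⟩ := hμ'
    have e2 : v ⬝ᵥ (G.signlessLap *ᵥ v) = μ' * (∑ x, v x^2) := by
      rw [hv, dotProduct_smul, smul_eq_mul]
      congr 1
      simp [dotProduct, sq]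
    have e1 : v ⬝ᵥ (G.signlessLap *ᵥ v)
        = (m-2) * (∑ x, v x^2) + (∑ x, v x)^2 - (v a + v b)^2 := by
      rw [hQv]
      simp only [dotProduct]
      have hpt : ∀ x : V, v x * ((m-2) * v x + (∑ y, v y) - (v a + v b) * u x)
          = (m-2) * v x^2 + v x * (∑ y, v y) - (v a + v b) * (u x * v x) := fun x => by ring
      rw [Finset.sum_congr rfl fun x _ => hpt x, Finset.sum_sub_distrib, Finset.sum_add_distrib,
        ← Finset.mul_sum, ← Finset.sum_mul, ← Finset.mul_sum]
      rw [show ∑ x, u x * v x = u ⬝ᵥ v from rfl, hdotu v]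
      ring
    have hNpos : 0 < ∑ x, v x^2 := by
      obtain ⟨x, hx⟩ : ∃ x, v x ≠ 0 := by
        by_contra hcon
        push_neg at hcon
        exact hv0 (funext hcon)
      exact Finset.sum_pos' (fun i _ => sq_nonneg _) ⟨x, Finset.mem_univ x, by positivity⟩
    have hsplit1 : (∑ x ∈ univ \ ({a,b} : Finset V), v x ^ 2) + (v a^2 + v b^2)
        = ∑ x, v x^2 := by
      rw [show v a^2 + v b^2 = ∑ x ∈ ({a,b} : Finset V), v x ^ 2 from
        (Finset.sum_pair (f := fun x => v x ^ 2) hab).symm]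
      exact Finset.sum_sdiff (Finset.subset_univ _)
    have hsplit2 : (∑ x ∈ univ \ ({a,b} : Finset V), v x) + (v a + v b) = ∑ x, v x := by
      rw [show v a + v b = ∑ x ∈ ({a,b} : Finset V), v x from
        (Finset.sum_pair (f := fun x => v x) hab).symm]
      exact Finset.sum_sdiff (Finset.subset_univ _)
    have hcard : (((univ \ ({a,b} : Finset V)).card : ℕ) : ℝ) = m - 2 := by
      rw [Finset.card_sdiff_of_subset (Finset.subset_univ _), card_univ, hn, Finset.card_pair hab]
      have h2 : 2 ≤ n := by omega
      rw [hm']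
      push_cast [Nat.cast_sub h2]
      ring
    have hCS : (∑ x ∈ univ \ ({a,b} : Finset V), v x)^2
        ≤ (m-2) * ∑ x ∈ univ \ ({a,b} : Finset V), v x^2 := by
      have h := sq_sum_le_card_mul_sum_sq (s := univ \ ({a,b} : Finset V)) (f := v)
      rw [hcard] at h
      exact h
    have ht2 : (v a + v b)^2 ≤ 2 * (v a^2 + v b^2) := by nlinarith [sq_nonneg (v a - v b)]
    have hmain := quad_ineq_aux m c (∑ x ∈ univ \ ({a,b} : Finset V), v x) (v a + v b)
      (∑ x ∈ univ \ ({a,b} : Finset V), v x^2) (v a^2 + v b^2) hm hc0 hcrel hCS ht2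
    have hfin : lam * (∑ x, v x^2) ≤ μ' * (∑ x, v x^2) := by
      have h1 : μ' * (∑ x, v x^2)
          = (m-2) * (∑ x, v x^2) + (∑ x, v x)^2 - (v a + v b)^2 := by rw [← e2, e1]
      rw [h1, hlamc, ← hsplit1, ← hsplit2]
      clear_value lam μ c s m
      clear hQ hQv e1 e2 hv hadj hdeg hdotu hsumu hlam' hμ' hc' hs' hm' hu' hua hub hG
      linarith [hmain]
    exact le_of_mul_le_mul_right hfin hNpos
end

section
/- If H is a simple graph with exactly n-3 edges, no isolated vertices, n vertices (n ≥ 8), and H contains adjacent vertices u, v' with d(u) + d(v') = n - 2 and d(u) ∈ {1, n-3} and such that the component containing u has exactly n-3 edges, then that component is the star K_{1,n-3} and H = K_{1,n-3} ∪ K_2. -/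
/-!
The vertex `w` of degree `n - 3` (`u` itself, or `v'` when `d(u) = 1`) lies in the component `C`
of `u`, and all its `n - 3` edges are edges of `C`. As `C` has exactly `n - 3` edges, every edge
of `C` contains `w`, and since there are no isolated vertices `C` is the star centred at `w`, with
`n - 2` vertices. The two remaining vertices form a union of components without isolated vertices,
hence they span a single edge.
-/

open SimpleGraph Finset

namespace SimpleGraph

variable {W : Type*} [Fintype W] {G : SimpleGraph W} [DecidableRel G.Adj]

theorem mem_of_degree_eq_card_edgeFinset [DecidableEq W] {w : W}
    (hw : G.degree w = #G.edgeFinset) {e : Sym2 W} (he : e ∈ G.edgeSet) : w ∈ e := by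
  have hinc : G.incidenceFinset w = G.edgeFinset :=
    eq_of_subset_of_card_le (G.incidenceFinset_subset w)
      (by rw [card_incidenceFinset_eq_degree, hw])
  rw [← mem_edgeFinset, ← hinc, mem_incidenceFinset] at he
  exact he.2

theorem eq_starGraph_of_degree_eq_card_edgeFinset {w : W} (hw : G.degree w = #G.edgeFinset)
    (hpos : ∀ v, 0 < G.degree v) : G = starGraph w := by
  classical
  have hcenter : ∀ {x y}, G.Adj x y → x = w ∨ y = w := fun hxy => by
    simpa [eq_comm] using mem_of_degree_eq_card_edgeFinset hw (G.mem_edgeSet.mpr hxy)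
  have hleaf : ∀ {y}, y ≠ w → G.Adj y w := fun {y} hy => by
    obtain ⟨z, hyz⟩ := (G.degree_pos_iff_exists_adj y).mp (hpos y)
    obtain rfl := (hcenter hyz).resolve_left hy
    exact hyz
  ext x y
  rw [starGraph_adj]
  refine ⟨fun hxy => ⟨hxy.ne, hcenter hxy⟩, ?_⟩
  rintro ⟨hne, rfl | rfl⟩
  · exact (hleaf hne.symm).symm
  · exact hleaf hne

theorem nonempty_starGraph_iso_completeBipartiteGraph {V : Type*} [Fintype V] (r : V) :
    Nonempty (starGraph r ≃g completeBipartiteGraph (Fin 1) (Fin (Fintype.card V - 1))) := by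
  classical
  have hcard : Fintype.card V = Fintype.card (Fin 1 ⊕ Fin (Fintype.card V - 1)) := by
    have := Fintype.card_pos_iff.mpr ⟨r⟩
    simp only [Fintype.card_sum, Fintype.card_fin]
    omega
  let e₀ := Fintype.equivOfCardEq hcard
  let e := e₀.trans (Equiv.swap (e₀ r) (.inl 0))
  have he : e r = .inl 0 := Equiv.swap_apply_left _ _
  refine ⟨⟨e, fun {x y} => ?_⟩⟩
  rw [starGraph_adj, ne_eq, ← e.apply_eq_iff_eq (x := x) (y := y),
    ← e.apply_eq_iff_eq (x := x) (y := r), ← e.apply_eq_iff_eq (x := y) (y := r), he]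
  rcases e x with ⟨⟩ | _ <;> rcases e y with ⟨⟩ | _ <;> simp [Fin.fin_one_eq_zero]

theorem nonempty_iso_completeBipartiteGraph_of_degree_eq_card_edgeFinset {w : W}
    (hw : G.degree w = #G.edgeFinset) (hpos : ∀ v, 0 < G.degree v) :
    Nonempty (G ≃g completeBipartiteGraph (Fin 1) (Fin (G.degree w))) := by
  classical
  obtain rfl := eq_starGraph_of_degree_eq_card_edgeFinset hw hpos
  have hdeg : (starGraph w).degree w = Fintype.card W - 1 := by
    convert degree_starGraph_center (r := w)
  rw [hdeg]
  exact nonempty_starGraph_iso_completeBipartiteGraph w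

theorem eq_top_of_card_eq_two (hcard : Fintype.card W = 2) (hpos : ∀ v, 0 < G.degree v) :
    G = ⊤ := by
  ext x y
  rw [top_adj]
  refine ⟨Adj.ne, fun hne => ?_⟩
  obtain ⟨z, hxz⟩ := (G.degree_pos_iff_exists_adj x).mp (hpos x)
  have hunique := (Nat.card_eq_two_iff' x).mp (by rwa [Nat.card_eq_fintype_card])
  rwa [hunique.unique hne.symm hxz.ne.symm]

variable {V : Type*} {G : SimpleGraph V} {S : Set V}

theorem degree_induce_of_forall_adj_mem [Fintype V] [DecidableRel G.Adj]
    [DecidablePred (· ∈ S)]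
    (hS : ∀ {x y}, x ∈ S → G.Adj x y → y ∈ S) (v : S) :
    (G.induce S).degree v = G.degree v :=
  degree_induce_of_neighborSet_subset fun _ hy => hS v.2 hy

variable (S) in
def Iso.induceSumInduceCompl [DecidablePred (· ∈ S)]
    (hS : ∀ {x y}, x ∈ S → G.Adj x y → y ∈ S) : G.induce S ⊕g G.induce Sᶜ ≃g G where
  toEquiv := Equiv.Set.sumCompl S
  map_rel_iff' {a b} := by
    rcases a with a | a <;> rcases b with b | b
    · simp
    · simpa using fun h => b.2 (hS a.2 h)
    · simpa using fun h => a.2 (hS b.2 h.symm)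
    · simp

end SimpleGraph

theorem eq_star_union_edge_general
    {V : Type*} [Fintype V] (H : SimpleGraph V) [DecidableRel H.Adj]
    (n : ℕ) (hn : Fintype.card V = n)
    (hiso : ∀ v : V, 0 < H.degree v)
    (u v' : V) (hadj : H.Adj u v')
    (hsum : H.degree u + H.degree v' = n - 2)
    (hdu : H.degree u = 1 ∨ H.degree u = n - 3)
    (hcomp : (H.induce {v | H.Reachable u v}).edgeSet.ncard = n - 3) :
    Nonempty (H.induce {v | H.Reachable u v} ≃g
        completeBipartiteGraph (Fin 1) (Fin (n - 3))) ∧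
      Nonempty (H ≃g
        completeBipartiteGraph (Fin 1) (Fin (n - 3)) ⊕g (⊤ : SimpleGraph (Fin 2))) := by
  classical
  set S : Set V := {v | H.Reachable u v}
  have hS : ∀ {x y}, x ∈ S → H.Adj x y → y ∈ S := fun hx hxy => hx.trans hxy.reachable
  obtain ⟨w, hwS, hw⟩ : ∃ w ∈ S, H.degree w = n - 3 := by
    rcases hdu with h1 | h3
    · exact ⟨v', hadj.reachable, by omega⟩
    · exact ⟨u, Reachable.refl u, h3⟩
  have hSc : ∀ {x y}, x ∈ Sᶜ → H.Adj x y → y ∈ Sᶜ := fun hx hxy hy => hx (hS hy hxy.symm)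
  have hdegS := degree_induce_of_forall_adj_mem hS
  obtain ⟨eS⟩ := nonempty_iso_completeBipartiteGraph_of_degree_eq_card_edgeFinset
    (G := H.induce S) (w := ⟨w, hwS⟩)
    (by rw [hdegS, hw, ← hcomp, ← coe_edgeFinset, Set.ncard_coe_finset])
    (fun v => hdegS v ▸ hiso v)
  rw [hdegS, hw] at eS
  have hcardS : Fintype.card S = 1 + (n - 3) := by simpa using Fintype.card_congr eS.toEquiv
  have hcardSc : Fintype.card ↥Sᶜ = 2 := by
    have hw_pos := hw ▸ hiso w
    rw [Fintype.card_compl_set, hn, hcardS]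
    omega
  have htop : H.induce Sᶜ = ⊤ := eq_top_of_card_eq_two hcardSc
    fun v => degree_induce_of_forall_adj_mem hSc v ▸ hiso v
  have eSc : H.induce Sᶜ ≃g (⊤ : SimpleGraph (Fin 2)) :=
    htop ▸ Iso.completeGraph (Fintype.equivFinOfCardEq hcardSc)
  exact ⟨⟨eS⟩, ⟨(Iso.induceSumInduceCompl S hS).symm.trans (eS.sumCongr eSc)⟩⟩

/-- Let `H` be a graph on `n ≥ 8` vertices with `n - 2` edges in total and no
isolated vertex. If `H` has adjacent vertices `u`, `v'` with `d(u) + d(v') = n - 2`,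
`d(u) ∈ {1, n-3}`, and the component of `u` has exactly `n - 3` edges, then that
component is the star `K_{1,n-3}` and `H = K_{1,n-3} ∪ K₂`. -/
theorem eq_star_union_edge
    {V : Type*} [Fintype V] [DecidableEq V] (H : SimpleGraph V) [DecidableRel H.Adj]
    (n : ℕ) (hn : Fintype.card V = n) (h8 : 8 ≤ n)
    (hedges : H.edgeFinset.card = n - 2)
    (hiso : ∀ v : V, 0 < H.degree v)
    (u v' : V) (hadj : H.Adj u v')
    (hsum : H.degree u + H.degree v' = n - 2)
    (hdu : H.degree u = 1 ∨ H.degree u = n - 3)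
    (hcomp : (H.induce {v | H.Reachable u v}).edgeSet.ncard = n - 3) :
    Nonempty (H.induce {v | H.Reachable u v} ≃g
        completeBipartiteGraph (Fin 1) (Fin (n - 3))) ∧
      Nonempty (H ≃g
        completeBipartiteGraph (Fin 1) (Fin (n - 3)) ⊕g (⊤ : SimpleGraph (Fin 2))) :=
  eq_star_union_edge_general H n hn hiso u v' hadj hsum hdu hcomp
end

section
/- Let n ≥ 8, 0 ≤ q < 1, and suppose real numbers x_1, x_2, x_4, not all zero, satisfy (q - 2)x_1 - 2x_2 = 0, 2x_2 + (2n - 6 - q)x_4 = 0, and x_1 + (n - 2 - q)x_2 + (n-3)x_4 = 0. Then a contradiction follows; i.e., no such q and (x_1,x_2,x_4) exist. -/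
/-- For `n ≥ 8` and `0 ≤ q < 1`, the linear system
`(q-2)x₁ - 2x₂ = 0`, `2x₂ + (2n-6-q)x₄ = 0`, `x₁ + (n-2-q)x₂ + (n-3)x₄ = 0`
has no solution with `(x₁, x₂, x₄) ≠ (0, 0, 0)`. -/
theorem no_nontrivial_solution (n : ℕ) (h8 : 8 ≤ n) (q x1 x2 x4 : ℝ)
    (hq0 : 0 ≤ q) (hq1 : q < 1)
    (hx : ¬(x1 = 0 ∧ x2 = 0 ∧ x4 = 0))
    (h1 : (q - 2) * x1 - 2 * x2 = 0)
    (h2 : 2 * x2 + (2 * (n : ℝ) - 6 - q) * x4 = 0)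
    (h3 : x1 + ((n : ℝ) - 2 - q) * x2 + ((n : ℝ) - 3) * x4 = 0) :
    False := by
  have hn : (8:ℝ) ≤ (n:ℝ) := by exact_mod_cast h8
  have hA : q - 2 < 0 := by linarith
  have hB : (0:ℝ) < 2 * (n:ℝ) - 6 - q := by linarith
  rcases eq_or_ne x2 0 with h | h
  · apply hx
    have hx1 : x1 = 0 := by
      have : (q - 2) * x1 = 0 := by linarith [h1]
      rcases mul_eq_zero.mp this with h' | h'
      · linarith
      · exact h'
    have hx4 : x4 = 0 := by
      have : (2 * (n:ℝ) - 6 - q) * x4 = 0 := by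
        have := h2; rw [h] at this; linarith
      rcases mul_eq_zero.mp this with h' | h'
      · linarith
      · exact h'
    exact ⟨hx1, h, hx4⟩
  · have key : (2 * (2 * (n:ℝ) - 6 - q) + ((n:ℝ) - 2 - q) * (q - 2) * (2 * (n:ℝ) - 6 - q)
        - 2 * ((n:ℝ) - 3) * (q - 2)) * x2 = 0 := by
      linear_combination (q - 2) * (2 * (n:ℝ) - 6 - q) * h3 - (2 * (n:ℝ) - 6 - q) * h1
        - (q - 2) * ((n:ℝ) - 3) * h2
    have hD : 2 * (2 * (n:ℝ) - 6 - q) + ((n:ℝ) - 2 - q) * (q - 2) * (2 * (n:ℝ) - 6 - q)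
        - 2 * ((n:ℝ) - 3) * (q - 2) < 0 := by
      nlinarith [mul_pos (show (0:ℝ) < (n:ℝ) - 2 - q by linarith) hB,
        mul_pos (mul_pos (show (0:ℝ) < (n:ℝ) - 2 - q by linarith) (show (0:ℝ) < 2 - q by linarith)) hB]
    rcases mul_eq_zero.mp key with h' | h'
    · linarith
    · exact h h'
end
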